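/- One has τ(P) = (9/8)·‖∇J‖². -/

import Mathlib

/-!
Write `⟨A, B⟩ = ∑ g^{ij} g^{ks} g(A(e_i, e_k), B(e_j, e_s))` for bilinear maps `A, B : V × V → V`,
so that `‖∇J‖² = ⟨N, N⟩`, and `Aᵗ(x, y) = A(y, x)`. Since `N(x, Jy) = -JN(x, y)`, the quasi-Kähler
condition makes `N`, hence `Q`, traceless, and then `τ(P) = 3⟨Q, Qᵗ⟩`. Expanding
`Q = (2JNᵗ - JN - N(J·, ·))/4` gives nine pairings, which moving `J` and transposes across `⟨·, ·⟩`
reduces to `n = ⟨N, N⟩`, `m = ⟨N, Nᵗ⟩` and `p = ⟨N(J·, ·), JN⟩`: `16⟨Q, Qᵗ⟩ = 4n - 4m - 4p`.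
The pairing is invariant under rotating the three slots of `g(A(x, y), z)`; this gives `p = 0`
and, with the cyclic condition, `n + 2m = 0`. So `τ(P) = 3(n - m)/4 = 9n/8`.
-/

noncomputable def tauL {V : Type*} [AddCommGroup V] [Module ℝ V] {ι : Type*} [Fintype ι]
    (e : Module.Basis ι ℝ V) (ginv : ι → ι → ℝ) (L : V → V → V → V → ℝ) : ℝ :=
  ∑ i, ∑ j, ∑ k, ∑ s, ginv i j * ginv k s * L (e i) (e k) (e s) (e j)

noncomputable def tauStarL {V : Type*} [AddCommGroup V] [Module ℝ V] {ι : Type*} [Fintype ι]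
    (J : V →ₗ[ℝ] V) (e : Module.Basis ι ℝ V) (ginv : ι → ι → ℝ) (L : V → V → V → V → ℝ) : ℝ :=
  ∑ i, ∑ j, ∑ k, ∑ s, ginv i j * ginv k s * L (e i) (e k) (e s) (J (e j))

noncomputable def normNablaJ {V : Type*} [AddCommGroup V] [Module ℝ V] {ι : Type*} [Fintype ι]
    (g : V →ₗ[ℝ] V →ₗ[ℝ] ℝ) (N : V →ₗ[ℝ] V →ₗ[ℝ] V) (e : Module.Basis ι ℝ V)
    (ginv : ι → ι → ℝ) : ℝ :=
  ∑ i, ∑ j, ∑ k, ∑ s, ginv i j * ginv k s * g (N (e i) (e k)) (N (e j) (e s))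

open Finset

lemma Finset.sum_comm_pairs {ι M : Type*} [Fintype ι] [AddCommMonoid M] (f : ι → ι → ι → ι → M) :
    ∑ i, ∑ j, ∑ k, ∑ s, f i j k s = ∑ k, ∑ s, ∑ i, ∑ j, f i j k s := by
  calc ∑ i, ∑ j, ∑ k, ∑ s, f i j k s = ∑ i, ∑ k, ∑ j, ∑ s, f i j k s :=
        sum_congr rfl fun _ _ => sum_comm
    _ = ∑ i, ∑ k, ∑ s, ∑ j, f i j k s :=
        sum_congr rfl fun _ _ => sum_congr rfl fun _ _ => sum_comm
    _ = ∑ k, ∑ i, ∑ s, ∑ j, f i j k s := sum_comm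
    _ = ∑ k, ∑ s, ∑ i, ∑ j, f i j k s := sum_congr rfl fun _ _ => sum_comm

section MetricContraction

variable {V M : Type*} [AddCommGroup V] [Module ℝ V] [AddCommGroup M] [Module ℝ M]
  {ι : Type*} [Fintype ι] {g : V →ₗ[ℝ] V →ₗ[ℝ] ℝ} {e : Module.Basis ι ℝ V} {ginv : ι → ι → ℝ}

variable (g e ginv) in
def IsGramInverse [DecidableEq ι] : Prop :=
  ∀ i j : ι, ∑ k, ginv i k * g (e k) (e j) = if i = j then 1 else 0

lemma ginv_comm [DecidableEq ι]
    (hgsymm : ∀ x y : V, g x y = g y x) (hginv : IsGramInverse g e ginv)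
    (i j : ι) : ginv i j = ginv j i := by
  set G : Matrix ι ι ℝ := Matrix.of fun i j => g (e i) (e j)
  have hleft : Matrix.of ginv * G = 1 := by
    ext i j; simpa [G, Matrix.mul_apply, Matrix.one_apply] using hginv i j
  have hinv : Matrix.of ginv = G⁻¹ := (Matrix.inv_eq_left_inv hleft).symm
  have hG : G.transpose = G := by ext i j; exact hgsymm _ _
  have : (Matrix.of ginv).transpose = Matrix.of ginv := by
    rw [hinv, Matrix.transpose_nonsing_inv, hG]
  exact congrFun₂ this j i

lemma sum_ginv_mul_eq_repr [DecidableEq ι] (hginv : IsGramInverse g e ginv) (a : ι) (v : V) :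
    ∑ b, ginv a b * g (e b) v = e.repr v a := by
  have : ∑ b, ginv a b • g (e b) = e.coord a :=
    e.ext fun c => by simp [hginv a c, Finsupp.single_apply, eq_comm]
  simpa using LinearMap.congr_fun this v

lemma sum_ginv_smul_eq [DecidableEq ι] (hginv : IsGramInverse g e ginv) (v : V) :
    ∑ a, ∑ b, (ginv a b * g (e b) v) • e a = v := by
  simp_rw [← Finset.sum_smul, sum_ginv_mul_eq_repr hginv, e.sum_repr]

lemma sum_ginv_mul_mul [DecidableEq ι] (hginv : IsGramInverse g e ginv) (u v : V) :
    ∑ a, ∑ b, ginv a b * g u (e a) * g (e b) v = g u v := by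
  conv_rhs => rw [← sum_ginv_smul_eq hginv v]
  simp only [map_sum, map_smul, smul_eq_mul]
  exact sum_congr rfl fun _ _ => sum_congr rfl fun _ _ => by ring

variable (e ginv) in
noncomputable def metricTrace : (V →ₗ[ℝ] V →ₗ[ℝ] M) →ₗ[ℝ] M where
  toFun B := ∑ i, ∑ j, ginv i j • B (e i) (e j)
  map_add' _ _ := by simp [sum_add_distrib]
  map_smul' c B := by
    simp only [LinearMap.smul_apply, RingHom.id_apply, smul_sum]
    exact sum_congr rfl fun _ _ => sum_congr rfl fun _ _ => smul_comm _ _ _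

lemma metricTrace_apply (B : V →ₗ[ℝ] V →ₗ[ℝ] M) :
    metricTrace e ginv B = ∑ i, ∑ j, ginv i j • B (e i) (e j) := rfl

lemma metricTrace_compr₂ {M' : Type*} [AddCommGroup M'] [Module ℝ M']
    (B : V →ₗ[ℝ] V →ₗ[ℝ] M) (f : M →ₗ[ℝ] M') :
    metricTrace e ginv (B.compr₂ f) = f (metricTrace e ginv B) := by
  simp [metricTrace_apply]

lemma metricTrace_flip [DecidableEq ι]
    (hgsymm : ∀ x y : V, g x y = g y x) (hginv : IsGramInverse g e ginv)
    (B : V →ₗ[ℝ] V →ₗ[ℝ] M) : metricTrace e ginv B.flip = metricTrace e ginv B := by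
  rw [metricTrace_apply, metricTrace_apply, sum_comm]
  simp_rw [LinearMap.flip_apply, ginv_comm hgsymm hginv]

lemma metricTrace_comp [DecidableEq ι]
    (hgsymm : ∀ x y : V, g x y = g y x) (hginv : IsGramInverse g e ginv)
    {J : V →ₗ[ℝ] V} (hJ : ∀ x y : V, g (J x) y = g x (J y)) (B : V →ₗ[ℝ] V →ₗ[ℝ] M) :
    metricTrace e ginv (B ∘ₗ J) = metricTrace e ginv (B.compl₂ J) := by
  simp only [metricTrace_apply, LinearMap.comp_apply, LinearMap.compl₂_apply]
  conv_lhs => enter [2, i, 2, j]; rw [← sum_ginv_smul_eq hginv (J (e i))]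
  conv_rhs => enter [2, i, 2, j]; rw [← sum_ginv_smul_eq hginv (J (e j))]
  simp only [map_sum, map_smul, LinearMap.sum_apply, LinearMap.smul_apply, smul_sum, smul_smul]
  rw [sum_comm_pairs]
  refine sum_congr rfl fun a _ => sum_congr rfl fun b _ => ?_
  rw [sum_comm]
  refine sum_congr rfl fun j _ => sum_congr rfl fun i _ => ?_
  rw [← hJ (e i), hgsymm (J (e i)), ginv_comm hgsymm hginv j i]
  congr 1
  ring

lemma metricTrace_eq_zero_of_J_invariant [DecidableEq ι]
    (hgsymm : ∀ x y : V, g x y = g y x) (hginv : IsGramInverse g e ginv)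
    {J : V →ₗ[ℝ] V} (hJ2 : ∀ x, J (J x) = -x) (hJ : ∀ x y : V, g (J x) y = g x (J y))
    (B : V →ₗ[ℝ] V →ₗ[ℝ] M) (hB : ∀ x y, B (J x) (J y) = B x y) :
    metricTrace e ginv B = 0 := by
  have hJJ : B = B.compl₂ J ∘ₗ J := by ext x y; simp [hB]
  have hneg : (B.compl₂ J).compl₂ J = -B := by ext x y; simp [hJ2]
  have := metricTrace_comp hgsymm hginv hJ (B.compl₂ J)
  rw [← hJJ, hneg, map_neg] at this
  have h2 : (2 : ℝ) • metricTrace e ginv B = 0 := by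
    rw [two_smul]; nth_rewrite 2 [this]; exact add_neg_cancel _
  exact (smul_eq_zero.mp h2).resolve_left two_ne_zero

variable (g e ginv) in
noncomputable def metricPairing :
    (V →ₗ[ℝ] V →ₗ[ℝ] V) →ₗ[ℝ] (V →ₗ[ℝ] V →ₗ[ℝ] V) →ₗ[ℝ] ℝ :=
  LinearMap.mk₂ ℝ
    (fun A B => ∑ i, ∑ j, ∑ k, ∑ s, ginv i j * ginv k s * g (A (e i) (e k)) (B (e j) (e s)))
    (fun _ _ _ => by simp only [LinearMap.add_apply, map_add, mul_add, sum_add_distrib])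
    (fun _ _ _ => by simp only [LinearMap.smul_apply, map_smul, smul_eq_mul, mul_sum]; ac_rfl)
    (fun _ _ _ => by simp only [LinearMap.add_apply, map_add, mul_add, sum_add_distrib])
    (fun _ _ _ => by simp only [LinearMap.smul_apply, map_smul, smul_eq_mul, mul_sum]; ac_rfl)

lemma metricPairing_apply (A B : V →ₗ[ℝ] V →ₗ[ℝ] V) : metricPairing g e ginv A B =
    ∑ i, ∑ j, ∑ k, ∑ s, ginv i j * ginv k s * g (A (e i) (e k)) (B (e j) (e s)) := rfl

lemma metricPairing_comm [DecidableEq ι]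
    (hgsymm : ∀ x y : V, g x y = g y x) (hginv : IsGramInverse g e ginv)
    (A B : V →ₗ[ℝ] V →ₗ[ℝ] V) : metricPairing g e ginv A B = metricPairing g e ginv B A := by
  rw [metricPairing_apply, metricPairing_apply, sum_comm]
  refine sum_congr rfl fun j _ => sum_congr rfl fun i _ => ?_
  rw [sum_comm]
  refine sum_congr rfl fun s _ => sum_congr rfl fun k _ => ?_
  rw [hgsymm, ginv_comm hgsymm hginv i, ginv_comm hgsymm hginv k]

lemma metricPairing_flip (A B : V →ₗ[ℝ] V →ₗ[ℝ] V) :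
    metricPairing g e ginv A.flip B.flip = metricPairing g e ginv A B := by
  rw [metricPairing_apply, metricPairing_apply, sum_comm_pairs]
  simp only [LinearMap.flip_apply]
  ac_rfl

lemma metricPairing_compr₂_compr₂ {J : V →ₗ[ℝ] V} (hJg : ∀ x y : V, g (J x) (J y) = -g x y)
    (A B : V →ₗ[ℝ] V →ₗ[ℝ] V) :
    metricPairing g e ginv (A.compr₂ J) (B.compr₂ J) = -metricPairing g e ginv A B := by
  simp [metricPairing_apply, hJg]

lemma metricPairing_compr₂_left {J : V →ₗ[ℝ] V} (hJ : ∀ x y : V, g (J x) y = g x (J y))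
    (A B : V →ₗ[ℝ] V →ₗ[ℝ] V) :
    metricPairing g e ginv (A.compr₂ J) B = metricPairing g e ginv A (B.compr₂ J) := by
  simp [metricPairing_apply, hJ]

lemma metricPairing_comp_left [DecidableEq ι]
    (hgsymm : ∀ x y : V, g x y = g y x) (hginv : IsGramInverse g e ginv)
    {J : V →ₗ[ℝ] V} (hJ : ∀ x y : V, g (J x) y = g x (J y)) (A B : V →ₗ[ℝ] V →ₗ[ℝ] V) :
    metricPairing g e ginv (A ∘ₗ J) B = metricPairing g e ginv A (B ∘ₗ J) := by
  have key (k s : ι) : ∑ i, ∑ j, ginv i j * g (A (J (e i)) (e k)) (B (e j) (e s)) =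
      ∑ i, ∑ j, ginv i j * g (A (e i) (e k)) (B (J (e j)) (e s)) := by
    simpa [metricTrace_apply] using
      metricTrace_comp hgsymm hginv hJ (g.compl₁₂ (A.flip (e k)) (B.flip (e s)))
  simp only [metricPairing_apply, LinearMap.comp_apply]
  rw [sum_comm_pairs, sum_comm_pairs (fun i j k s => ginv i j * ginv k s * _)]
  refine sum_congr rfl fun k _ => sum_congr rfl fun s _ => ?_
  simp only [mul_right_comm _ (ginv k s), ← sum_mul, key]

lemma metricPairing_eq_sum_six [DecidableEq ι]
    (hgsymm : ∀ x y : V, g x y = g y x) (hginv : IsGramInverse g e ginv)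
    (A B : V →ₗ[ℝ] V →ₗ[ℝ] V) : metricPairing g e ginv A B =
      ∑ i, ∑ j, ∑ k, ∑ s, ∑ a, ∑ b, ginv i j * ginv k s * ginv a b *
        (g (A (e i) (e k)) (e a) * g (B (e j) (e s)) (e b)) := by
  simp_rw [metricPairing_apply, ← sum_ginv_mul_mul hginv (A _ _) (B _ _), mul_sum]
  refine sum_congr rfl fun _ _ => sum_congr rfl fun _ _ => sum_congr rfl fun _ _ =>
    sum_congr rfl fun _ _ => sum_congr rfl fun _ _ => sum_congr rfl fun _ _ => ?_
  rw [hgsymm (e _)]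
  ring

/-- Both sides are the full contraction of the trilinear forms `g (A x y) z` and `g (B x y) z`
(see `metricPairing_eq_sum_six`); rotating all three slots at once only relabels indices. -/
lemma metricPairing_rotate [DecidableEq ι]
    (hgsymm : ∀ x y : V, g x y = g y x) (hginv : IsGramInverse g e ginv)
    {A B A' B' : V →ₗ[ℝ] V →ₗ[ℝ] V} (hA : ∀ x y z, g (A' x y) z = g (A y z) x)
    (hB : ∀ x y z, g (B' x y) z = g (B y z) x) :
    metricPairing g e ginv A' B' = metricPairing g e ginv A B := by
  rw [metricPairing_eq_sum_six hgsymm hginv, metricPairing_eq_sum_six hgsymm hginv]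
  simp only [hA, hB]
  rw [sum_comm_pairs]
  refine sum_congr rfl fun _ _ => sum_congr rfl fun _ _ => ?_
  rw [sum_comm_pairs]
  refine sum_congr rfl fun _ _ => sum_congr rfl fun _ _ =>
    sum_congr rfl fun _ _ => sum_congr rfl fun _ _ => by ring

lemma tauL_eq_three_mul_metricPairing [DecidableEq ι]
    (hgsymm : ∀ x y : V, g x y = g y x) (hginv : IsGramInverse g e ginv)
    {Q : V →ₗ[ℝ] V →ₗ[ℝ] V} (hQ : metricTrace e ginv Q = 0) {P : V → V → V → V → ℝ}
    (hP : ∀ x y z w, P x y z w = 2 * g (Q x y) (Q z w) + g (Q z y) (Q x w) + g (Q x z) (Q y w)) :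
    tauL e ginv P = 3 * metricPairing g e ginv Q Q.flip := by
  have hQt (i j : ι) : ∑ k, ∑ s, ginv i j * ginv k s * g (Q (e s) (e k)) (Q (e i) (e j)) = 0 := by
    have := congrArg (fun v => ginv i j * g v (Q (e i) (e j)))
      ((metricTrace_flip hgsymm hginv Q).trans hQ)
    simpa [metricTrace_apply, mul_sum, mul_assoc] using this
  have hswap : ∑ i, ∑ j, ∑ k, ∑ s, ginv i j * ginv k s * g (Q (e i) (e s)) (Q (e k) (e j)) =
      metricPairing g e ginv Q Q.flip := by
    refine sum_congr rfl fun i _ => sum_congr rfl fun j _ => ?_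
    rw [sum_comm]
    simp [ginv_comm hgsymm hginv]
  simp only [tauL, hP, mul_add, sum_add_distrib, hQt, add_zero, hswap, mul_left_comm _ (2 : ℝ),
    ← mul_sum]
  change 2 * metricPairing g e ginv Q Q.flip + _ = _
  ring

end MetricContraction

section Norden

variable {V : Type*} [AddCommGroup V] [Module ℝ V] {ι : Type*} [Fintype ι]
  {g : V →ₗ[ℝ] V →ₗ[ℝ] ℝ} {e : Module.Basis ι ℝ V} {ginv : ι → ι → ℝ}
  {N : V →ₗ[ℝ] V →ₗ[ℝ] V} {J : V →ₗ[ℝ] V}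

lemma norden_J_symm (hJ2 : ∀ x, J (J x) = -x) (hJg : ∀ x y : V, g (J x) (J y) = -g x y)
    (x y : V) : g (J x) y = g x (J y) := by
  simpa [hJ2] using hJg x (J y)

lemma apply_J_right_eq_neg (hgnd : ∀ x : V, (∀ y : V, g x y = 0) → x = 0)
    (hJ2 : ∀ x, J (J x) = -x) (hJ : ∀ x y : V, g (J x) y = g x (J y))
    (hNJinv : ∀ x y z, g (N x y) z = g (N x (J y)) (J z)) (x y : V) :
    N x (J y) = -J (N x y) := by
  refine eq_neg_of_add_eq_zero_left (hgnd _ fun w => ?_)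
  have := hNJinv x y (-J w)
  simp only [map_neg, hJ2, neg_neg] at this
  simp [← this, hJ]

/-- With `θ w = tr g (N · ·) w`, the cyclic condition reads `θ w = -θ w - tr g (N w ·) ·`, and the
last trace vanishes by `J`-invariance. -/
lemma metricTrace_eq_zero_of_cyclic [DecidableEq ι]
    (hgsymm : ∀ x y : V, g x y = g y x) (hginv : IsGramInverse g e ginv)
    (hgnd : ∀ x : V, (∀ y : V, g x y = 0) → x = 0)
    (hJ2 : ∀ x, J (J x) = -x) (hJ : ∀ x y : V, g (J x) y = g x (J y))
    (hNsym : ∀ x y z, g (N x y) z = g (N x z) y)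
    (hNJinv : ∀ x y z, g (N x y) z = g (N x (J y)) (J z))
    (hNcyc : ∀ x y z, g (N x y) z + g (N y z) x + g (N z x) y = 0) :
    metricTrace e ginv N = 0 := by
  refine hgnd _ fun w => ?_
  have hinv : metricTrace e ginv (g ∘ₗ N w) = 0 :=
    metricTrace_eq_zero_of_J_invariant hgsymm hginv hJ2 hJ _ fun x y => (hNJinv w x y).symm
  have hcyc : N.compr₂ (g.flip w) + (N.compr₂ (g.flip w)).flip + g ∘ₗ N w = 0 := by
    ext x y
    simp only [LinearMap.compr₂_apply, LinearMap.flip_apply, LinearMap.add_apply,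
      LinearMap.comp_apply, LinearMap.zero_apply]
    linarith [hNcyc x y w, hNsym y w x]
  have h := congrArg (metricTrace e ginv) hcyc
  rw [map_add, map_add, metricTrace_flip hgsymm hginv, hinv, map_zero, add_zero,
    metricTrace_compr₂] at h
  simpa using h

variable (N J) in
noncomputable def tensorQ : V →ₗ[ℝ] V →ₗ[ℝ] V :=
  (1/4 : ℝ) • (N.compl₂ J - N ∘ₗ J - (2 : ℝ) • (N.flip ∘ₗ J))

lemma tensorQ_apply (x y : V) :
    tensorQ N J x y = (1/4 : ℝ) • (N x (J y) - N (J x) y - (2 : ℝ) • N y (J x)) := rfl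

lemma metricTrace_tensorQ [DecidableEq ι]
    (hgsymm : ∀ x y : V, g x y = g y x) (hginv : IsGramInverse g e ginv)
    (hJ : ∀ x y : V, g (J x) y = g x (J y)) (hNJ : ∀ x y, N x (J y) = -J (N x y))
    (htr : metricTrace e ginv N = 0) : metricTrace e ginv (tensorQ N J) = 0 := by
  have h₀ : metricTrace e ginv (N.compl₂ J) = 0 := by
    rw [show N.compl₂ J = -N.compr₂ J by ext; simp [hNJ], map_neg, metricTrace_compr₂, htr,
      map_zero, neg_zero]
  have h₁ : metricTrace e ginv (N ∘ₗ J) = 0 := by rw [metricTrace_comp hgsymm hginv hJ, h₀]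
  have h₂ : metricTrace e ginv (N.flip ∘ₗ J) = 0 := by
    rw [metricTrace_comp hgsymm hginv hJ, show N.flip.compl₂ J = (N ∘ₗ J).flip from rfl,
      metricTrace_flip hgsymm hginv, h₁]
  simp [tensorQ, h₀, h₁, h₂]

/-- Rotation and the cyclic condition give `⟨N, Nᵗ⟩ = -⟨N, N⟩ - ⟨N, Nᵗ⟩`. -/
lemma metricPairing_add_two_mul_flip [DecidableEq ι]
    (hgsymm : ∀ x y : V, g x y = g y x) (hginv : IsGramInverse g e ginv)
    (hNsym : ∀ x y z, g (N x y) z = g (N x z) y)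
    (hNcyc : ∀ x y z, g (N x y) z + g (N y z) x + g (N z x) y = 0) :
    metricPairing g e ginv N N + 2 * metricPairing g e ginv N N.flip = 0 := by
  have h := metricPairing_rotate hgsymm hginv (A := N) (B := N.flip) (A' := N.flip)
    (B' := -(N + N.flip)) (fun x y z => hNsym y x z) fun x y z => by
      simp only [LinearMap.neg_apply, LinearMap.add_apply, LinearMap.flip_apply, map_neg, map_add]
      linarith [hNcyc x y z, hNsym y z x, hNsym z x y]
  rw [map_neg, map_add, metricPairing_comm hgsymm hginv N.flip N, metricPairing_flip] at h
  linarith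

/-- Rotation turns this pairing into its own negative. -/
lemma metricPairing_comp_compr₂_eq_zero [DecidableEq ι]
    (hgsymm : ∀ x y : V, g x y = g y x) (hginv : IsGramInverse g e ginv)
    (hJ : ∀ x y : V, g (J x) y = g x (J y)) (hNJ : ∀ x y, N x (J y) = -J (N x y))
    (hNsym : ∀ x y z, g (N x y) z = g (N x z) y) :
    metricPairing g e ginv (N ∘ₗ J) (N.compr₂ J) = 0 := by
  have h := metricPairing_rotate hgsymm hginv (A := N ∘ₗ J) (B := N.compr₂ J)
    (A' := (N ∘ₗ J).flip) (B' := -(N.compr₂ J).flip) (fun x y z => hNsym (J y) x z)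
    fun x y z => by simp [hJ, hNsym y z (J x), hNJ]
  rw [map_neg, metricPairing_flip] at h
  linarith

lemma metricPairing_tensorQ_flip [DecidableEq ι]
    (hgsymm : ∀ x y : V, g x y = g y x) (hginv : IsGramInverse g e ginv)
    (hJ2 : ∀ x, J (J x) = -x) (hJg : ∀ x y : V, g (J x) (J y) = -g x y)
    (hNJ : ∀ x y, N x (J y) = -J (N x y)) (hNsym : ∀ x y z, g (N x y) z = g (N x z) y)
    (hNcyc : ∀ x y z, g (N x y) z + g (N y z) x + g (N z x) y = 0) :
    metricPairing g e ginv (tensorQ N J) (tensorQ N J).flip =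
      3 / 8 * metricPairing g e ginv N N := by
  have hJ := norden_J_symm hJ2 hJg
  set P := metricPairing g e ginv
  have hQ : tensorQ N J = (1/4 : ℝ) • ((2 : ℝ) • N.flip.compr₂ J - N.compr₂ J - N ∘ₗ J) := by
    ext x y; simp [tensorQ_apply, hNJ]; module
  have hQt : (tensorQ N J).flip =
      (1/4 : ℝ) • ((2 : ℝ) • N.compr₂ J - N.flip.compr₂ J - (N ∘ₗ J).flip) := by
    ext x y; simp [tensorQ_apply, hNJ]; module
  have hflip := metricPairing_flip (g := g) (e := e) (ginv := ginv)
  have hcomm := metricPairing_comm hgsymm hginv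
  have hJJ := metricPairing_compr₂_compr₂ (g := g) (e := e) (ginv := ginv) hJg
  have h₁ : P (N.flip.compr₂ J) (N.compr₂ J) = -P N N.flip := by rw [hJJ, hcomm]
  have h₂ : P (N.flip.compr₂ J) (N.flip.compr₂ J) = -P N N := by rw [hJJ, hflip]
  have h₃ : P (N.compr₂ J) (N.compr₂ J) = -P N N := hJJ N N
  have h₄ : P (N.compr₂ J) (N.flip.compr₂ J) = -P N N.flip := hJJ N N.flip
  have h₅ : P (N ∘ₗ J) (N.flip.compr₂ J) = P N N.flip := by
    rw [metricPairing_comp_left hgsymm hginv hJ,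
      show N.flip.compr₂ J ∘ₗ J = N.flip by ext; simp [hNJ, hJ2]]
  have h₆ : P (N.compr₂ J) (N ∘ₗ J).flip = P N N.flip := by
    rw [← h₅, hcomm, ← hflip, LinearMap.flip_flip]; rfl
  have h₇ : P (N ∘ₗ J) (N ∘ₗ J).flip = -P N N.flip := by
    rw [metricPairing_comp_left hgsymm hginv hJ,
      show (N ∘ₗ J).flip ∘ₗ J = -((N ∘ₗ J).flip.compr₂ J) by ext; simp [hNJ], map_neg,
      ← metricPairing_compr₂_left hJ, h₆]
  have h₈ : P (N ∘ₗ J) (N.compr₂ J) = 0 :=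
    metricPairing_comp_compr₂_eq_zero hgsymm hginv hJ hNJ hNsym
  have h₉ : P (N.flip.compr₂ J) (N ∘ₗ J).flip = 0 := by
    rw [show N.flip.compr₂ J = (N.compr₂ J).flip from rfl, hflip, hcomm, h₈]
  have hnm := metricPairing_add_two_mul_flip hgsymm hginv hNsym hNcyc
  rw [hQt, hQ]
  simp only [map_sub, map_smul, LinearMap.sub_apply, LinearMap.smul_apply, smul_eq_mul,
    h₁, h₂, h₃, h₄, h₅, h₆, h₇, h₈, h₉]
  linear_combination (-1 / 8 : ℝ) * hnm

end Norden

theorem stmt12_general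
    (V : Type*) [AddCommGroup V] [Module ℝ V]
    (g : V →ₗ[ℝ] V →ₗ[ℝ] ℝ)
    (hgsymm : ∀ x y : V, g x y = g y x)
    (hgnd : ∀ x : V, (∀ y : V, g x y = 0) → x = 0)
    (J : V →ₗ[ℝ] V)
    (hJ2 : ∀ x : V, J (J x) = -x)
    (hJg : ∀ x y : V, g (J x) (J y) = -(g x y))
    (N : V →ₗ[ℝ] V →ₗ[ℝ] V)
    (F : V → V → V → ℝ)
    (hF : ∀ x y z : V, F x y z = g (N x y) z)
    (hFsym : ∀ x y z : V, F x y z = F x z y)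
    (hFJ : ∀ x y z : V, F x y z = F x (J y) (J z))
    (hQK : ∀ x y z : V, F x y z + F y z x + F z x y = 0)
    (Q : V → V → V)
    (hQ : ∀ x y : V, Q x y = (1/4 : ℝ) • (N x (J y) - N (J x) y - (2 : ℝ) • N y (J x)))
    (P : V → V → V → V → ℝ)
    (hP : ∀ x y z w : V, P x y z w =
      2 * g (Q x y) (Q z w) + g (Q z y) (Q x w) + g (Q x z) (Q y w))
    {ι : Type*} [Fintype ι] [DecidableEq ι]
    (e : Module.Basis ι ℝ V)
    (ginv : ι → ι → ℝ)
    (hginv : ∀ i j : ι, (∑ k, ginv i k * g (e k) (e j)) = if i = j then (1:ℝ) else 0)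
    :
    tauL e ginv P = (9/8 : ℝ) * normNablaJ g N e ginv := by
  have hJ := norden_J_symm hJ2 hJg
  have hNsym (x y z : V) : g (N x y) z = g (N x z) y := by rw [← hF, hFsym, hF]
  have hNJinv (x y z : V) : g (N x y) z = g (N x (J y)) (J z) := by rw [← hF, hFJ, hF]
  have hNcyc (x y z : V) : g (N x y) z + g (N y z) x + g (N z x) y = 0 := by
    simpa only [hF] using hQK x y z
  have hNJ := apply_J_right_eq_neg hgnd hJ2 hJ hNJinv
  have htr := metricTrace_eq_zero_of_cyclic hgsymm hginv hgnd hJ2 hJ hNsym hNJinv hNcyc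
  have hQ' : ∀ x y, Q x y = tensorQ N J x y := hQ
  simp only [hQ'] at hP
  have htrQ := metricTrace_tensorQ hgsymm hginv hJ hNJ htr
  rw [tauL_eq_three_mul_metricPairing hgsymm hginv htrQ hP,
    metricPairing_tensorQ_flip hgsymm hginv hJ2 hJg hNJ hNsym hNcyc]
  change _ = _ * metricPairing g e ginv N N
  ring

theorem stmt12
    (V : Type*) [AddCommGroup V] [Module ℝ V] [FiniteDimensional ℝ V]
    (g : V →ₗ[ℝ] V →ₗ[ℝ] ℝ)
    (hgsymm : ∀ x y : V, g x y = g y x)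
    (hgnd : ∀ x : V, (∀ y : V, g x y = 0) → x = 0)
    (J : V →ₗ[ℝ] V)
    (hJ2 : ∀ x : V, J (J x) = -x)
    (hJg : ∀ x y : V, g (J x) (J y) = -(g x y))
    (N : V →ₗ[ℝ] V →ₗ[ℝ] V)
    (F : V → V → V → ℝ)
    (hF : ∀ x y z : V, F x y z = g (N x y) z)
    (hFsym : ∀ x y z : V, F x y z = F x z y)
    (hFJ : ∀ x y z : V, F x y z = F x (J y) (J z))
    (hQK : ∀ x y z : V, F x y z + F y z x + F z x y = 0)
    (Q : V → V → V)
    (hQ : ∀ x y : V, Q x y = (1/4 : ℝ) • (N x (J y) - N (J x) y - (2 : ℝ) • N y (J x)))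
    (P : V → V → V → V → ℝ)
    (hP : ∀ x y z w : V, P x y z w =
      2 * g (Q x y) (Q z w) + g (Q z y) (Q x w) + g (Q x z) (Q y w))
    {ι : Type*} [Fintype ι] [DecidableEq ι]
    (e : Module.Basis ι ℝ V)
    (ginv : ι → ι → ℝ)
    (hginv : ∀ i j : ι, (∑ k, ginv i k * g (e k) (e j)) = if i = j then (1:ℝ) else 0)
    :
    tauL e ginv P = (9/8 : ℝ) * normNablaJ g N e ginv :=
  stmt12_general V g hgsymm hgnd J hJ2 hJg N F hF hFsym hFJ hQK Q hQ P hP e ginv hginv
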